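/- arXiv:2111.02291 — 6 statements merged into one kernel-verified Lean document; each statement's English description precedes it below -/
import Mathlib

section
/- Let G be a symmetric positive semidefinite matrix, A a real matrix of compatible size, and c a vector. Then A · (I − G Aᵀ (A G Aᵀ)⁺ A) G c = 0, i.e., the vector (I − G Aᵀ (A G Aᵀ)⁺ A) G c lies in the kernel of A. -/
/-!
Write `G = S Sᴴ`. Then `A G = (A S) Sᴴ` has range inside that of `A S`, which is the range of the
Gram matrix `A G Aᴴ = (A S)(A S)ᴴ`. Hence any inner inverse `B` of `A G Aᴴ` satisfies
`A G Aᴴ B A G = A G`, and `A (I - G Aᴴ B A) G = A G - A G Aᴴ B A G = 0`.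
-/

open Matrix

namespace Matrix

open scoped ComplexOrder

variable {𝕜 : Type*} [RCLike 𝕜] {m n k : Type*} [Fintype m] [Fintype n] [Fintype k]

theorem mul_conjTranspose_mul_mul_eq_self {X : Matrix m k 𝕜} {P : Matrix m m 𝕜}
    (hP : X * Xᴴ * P * (X * Xᴴ) = X * Xᴴ) : X * Xᴴ * P * X = X := by
  have hPstar : X * Xᴴ * Pᴴ * (X * Xᴴ) = X * Xᴴ := by
    simpa [Matrix.mul_assoc] using congrArg conjTranspose hP
  have hdefect : (X - X * Xᴴ * P * X) * (X - X * Xᴴ * P * X)ᴴ = 0 := by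
    simp only [conjTranspose_sub, conjTranspose_mul, conjTranspose_conjTranspose, Matrix.sub_mul,
      Matrix.mul_sub]
    simp only [← Matrix.mul_assoc] at hP hPstar ⊢
    rw [hPstar, hP, hPstar]
    abel
  exact (sub_eq_zero.mp (self_mul_conjTranspose_eq_zero.mp hdefect)).symm

open scoped MatrixOrder in
theorem PosSemidef.mul_mul_conjTranspose_mul_mul_eq {G : Matrix n n 𝕜} (hG : G.PosSemidef)
    {A : Matrix m n 𝕜} {P : Matrix m m 𝕜} (hP : A * G * Aᴴ * P * (A * G * Aᴴ) = A * G * Aᴴ) :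
    A * G * Aᴴ * P * (A * G) = A * G := by
  classical
  obtain ⟨S, rfl⟩ := CStarAlgebra.nonneg_iff_eq_mul_star_self.mp hG.nonneg
  have hgram : A * (S * star S) * Aᴴ = A * S * (A * S)ᴴ := by
    simp [conjTranspose_mul, star_eq_conjTranspose, Matrix.mul_assoc]
  rw [hgram] at hP ⊢
  have h := congrArg (· * Sᴴ) (mul_conjTranspose_mul_mul_eq_self hP)
  simpa [star_eq_conjTranspose, Matrix.mul_assoc] using h

end Matrix

theorem stmt1_general {n m : ℕ}
    (G : Matrix (Fin n) (Fin n) ℝ) (hG : G.PosSemidef)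
    (A : Matrix (Fin m) (Fin n) ℝ) (c : Fin n → ℝ)
    (B : Matrix (Fin m) (Fin m) ℝ)
    (hB1 : (A * G * Aᵀ) * B * (A * G * Aᵀ) = A * G * Aᵀ) :
    A.mulVec ((1 - G * Aᵀ * B * A).mulVec (G.mulVec c)) = 0 := by
  rw [← conjTranspose_eq_transpose_of_trivial] at hB1 ⊢
  have hrange := hG.mul_mul_conjTranspose_mul_mul_eq hB1
  calc A *ᵥ ((1 - G * Aᴴ * B * A) *ᵥ (G *ᵥ c))
      = (A * G - A * G * Aᴴ * B * (A * G)) *ᵥ c := by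
        simp only [mulVec_mulVec, Matrix.mul_sub, Matrix.sub_mul, Matrix.one_mul, Matrix.mul_assoc]
    _ = 0 := by rw [hrange, sub_self, zero_mulVec]

/-- For symmetric PSD `G`, matrix `A` and vector `c`,
`A ((I − G Aᵀ (A G Aᵀ)⁺ A) G c) = 0`, where `B` is the Moore–Penrose
pseudoinverse of `A G Aᵀ`. -/
theorem stmt1 {n m : ℕ}
    (G : Matrix (Fin n) (Fin n) ℝ) (hG : G.PosSemidef)
    (A : Matrix (Fin m) (Fin n) ℝ) (c : Fin n → ℝ)
    (B : Matrix (Fin m) (Fin m) ℝ)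
    (hB1 : (A * G * Aᵀ) * B * (A * G * Aᵀ) = A * G * Aᵀ)
    (hB2 : B * (A * G * Aᵀ) * B = B)
    (hB3 : ((A * G * Aᵀ) * B)ᵀ = (A * G * Aᵀ) * B)
    (hB4 : (B * (A * G * Aᵀ))ᵀ = B * (A * G * Aᵀ)) :
    A.mulVec ((1 - G * Aᵀ * B * A).mulVec (G.mulVec c)) = 0 :=
  stmt1_general G hG A c B hB1
end

section
/- Let G be a symmetric positive semidefinite matrix, A a matrix, and c a vector. Then cᵀ G c ≥ cᵀ G Aᵀ (A G Aᵀ)⁺ A G c, i.e., the derivative quantity −cᵀGc + cᵀ G Aᵀ (A G Aᵀ)⁺ A G c is nonpositive. -/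
open Matrix

/-
Write `M := A G Aᵀ` and factor the positive semidefinite `G` as `Sᵀ S`. Then `M = (A Sᵀ)(A Sᵀ)ᵀ`
has the same range as `A Sᵀ`, so `A G c = M w` for some `w`. Then
`cᵀ G Aᵀ B A G c = wᵀ M B M w = wᵀ M w`, and expanding `(c - Aᵀ w)ᵀ G (c - Aᵀ w) ≥ 0`, whose cross
term is `cᵀ G Aᵀ w = wᵀ M w` as well, gives `cᵀ G c ≥ wᵀ M w`.
-/

theorem Matrix.dotProduct_transpose_mul_mul_mulVec {R : Type*} [CommSemiring R]
    {m n : Type*} [Fintype m] [Fintype n] (N : Matrix m n R) (C : Matrix m m R) (x y : n → R) :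
    x ⬝ᵥ (Nᵀ * C * N) *ᵥ y = (N *ᵥ x) ⬝ᵥ C *ᵥ (N *ᵥ y) := by
  rw [← mulVec_mulVec, ← mulVec_mulVec, dotProduct_mulVec, vecMul_transpose]

section LinearOrderedField

variable {R : Type*} [Field R] [LinearOrder R] [IsStrictOrderedRing R]
  {l m n : Type*} [Fintype l] [Fintype m] [Fintype n]

theorem Matrix.range_mulVecLin_mul_transpose_self (K : Matrix m n R) :
    LinearMap.range (K * Kᵀ).mulVecLin = LinearMap.range K.mulVecLin :=
  Submodule.eq_of_le_of_finrank_eq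
    (by rw [mulVecLin_mul]; exact LinearMap.range_comp_le_range _ _)
    (rank_self_mul_transpose K)

theorem Matrix.exists_mul_transpose_self_mulVec_eq_mul_mulVec (K : Matrix m n R)
    (S : Matrix n l R) (v : l → R) : ∃ w, (K * Kᵀ) *ᵥ w = (K * S) *ᵥ v := by
  show (K * S) *ᵥ v ∈ LinearMap.range (K * Kᵀ).mulVecLin
  rw [range_mulVecLin_mul_transpose_self, ← mulVec_mulVec]
  exact LinearMap.mem_range_self _ _

end LinearOrderedField

namespace Matrix.PosSemidef

open scoped MatrixOrder

variable {n : Type*} [Fintype n] {G : Matrix n n ℝ}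

theorem exists_mul_mul_transpose_mulVec_eq {m : Type*} [Fintype m] (hG : G.PosSemidef)
    (A : Matrix m n ℝ) (c : n → ℝ) : ∃ w, (A * G * Aᵀ) *ᵥ w = (A * G) *ᵥ c := by
  classical
  obtain ⟨S, rfl⟩ := CStarAlgebra.nonneg_iff_eq_star_mul_self.mp hG.nonneg
  simpa [star_eq_conjTranspose, conjTranspose_eq_transpose_of_trivial, Matrix.mul_assoc,
    transpose_mul] using (A * Sᵀ).exists_mul_transpose_self_mulVec_eq_mul_mulVec S c

theorem two_mul_dotProduct_mulVec_sub_le (hG : G.PosSemidef) (x y : n → ℝ) :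
    2 * (x ⬝ᵥ G *ᵥ y) - y ⬝ᵥ G *ᵥ y ≤ x ⬝ᵥ G *ᵥ x := by
  have hGT : Gᵀ = G := hG.isHermitian
  have hsymm : y ⬝ᵥ G *ᵥ x = x ⬝ᵥ G *ᵥ y := by
    rw [← dotProduct_transpose_mulVec, hGT]
  have h := hG.dotProduct_mulVec_nonneg (x - y)
  simp only [star_trivial, mulVec_sub, dotProduct_sub, sub_dotProduct] at h
  linarith

end Matrix.PosSemidef

theorem stmt2_general {n m : ℕ}
    (G : Matrix (Fin n) (Fin n) ℝ) (hG : G.PosSemidef)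
    (A : Matrix (Fin m) (Fin n) ℝ) (c : Fin n → ℝ)
    (B : Matrix (Fin m) (Fin m) ℝ)
    (hB1 : (A * G * Aᵀ) * B * (A * G * Aᵀ) = A * G * Aᵀ) :
    c ⬝ᵥ (G * Aᵀ * B * A * G).mulVec c ≤ c ⬝ᵥ G.mulVec c := by
  have hGT : Gᵀ = G := hG.isHermitian
  have hAGT : (A * G)ᵀ = G * Aᵀ := by rw [transpose_mul, hGT]
  set M := A * G * Aᵀ with hM
  have hMT : Mᵀ = M := by rw [hM, transpose_mul, hAGT, transpose_transpose, Matrix.mul_assoc]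
  obtain ⟨w, hw⟩ := hG.exists_mul_mul_transpose_mulVec_eq A c
  have hquad : c ⬝ᵥ (G * Aᵀ * B * A * G) *ᵥ c = w ⬝ᵥ M *ᵥ w := by
    calc c ⬝ᵥ (G * Aᵀ * B * A * G) *ᵥ c = c ⬝ᵥ ((A * G)ᵀ * B * (A * G)) *ᵥ c := by
          simp only [hAGT, Matrix.mul_assoc]
      _ = (M *ᵥ w) ⬝ᵥ B *ᵥ (M *ᵥ w) := by rw [dotProduct_transpose_mul_mul_mulVec, hw]
      _ = w ⬝ᵥ M *ᵥ w := by rw [← dotProduct_transpose_mul_mul_mulVec, hMT, hB1]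
  have hcross : c ⬝ᵥ G *ᵥ (Aᵀ *ᵥ w) = w ⬝ᵥ M *ᵥ w := by
    rw [mulVec_mulVec, ← hAGT, dotProduct_transpose_mulVec, ← hw, dotProduct_comm]
  have hAw : (Aᵀ *ᵥ w) ⬝ᵥ G *ᵥ (Aᵀ *ᵥ w) = w ⬝ᵥ M *ᵥ w := by
    rw [← dotProduct_transpose_mul_mul_mulVec, transpose_transpose]
  linarith [hG.two_mul_dotProduct_mulVec_sub_le c (Aᵀ *ᵥ w)]

/-- For symmetric PSD `G`, matrix `A` and vector `c`,
`cᵀ G c ≥ cᵀ G Aᵀ (A G Aᵀ)⁺ A G c`. -/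
theorem stmt2 {n m : ℕ}
    (G : Matrix (Fin n) (Fin n) ℝ) (hG : G.PosSemidef)
    (A : Matrix (Fin m) (Fin n) ℝ) (c : Fin n → ℝ)
    (B : Matrix (Fin m) (Fin m) ℝ)
    (hB1 : (A * G * Aᵀ) * B * (A * G * Aᵀ) = A * G * Aᵀ)
    (hB2 : B * (A * G * Aᵀ) * B = B)
    (hB3 : ((A * G * Aᵀ) * B)ᵀ = (A * G * Aᵀ) * B)
    (hB4 : (B * (A * G * Aᵀ))ᵀ = B * (A * G * Aᵀ)) :
    c ⬝ᵥ (G * Aᵀ * B * A * G).mulVec c ≤ c ⬝ᵥ G.mulVec c :=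
  stmt2_general G hG A c B hB1
end

section
/- Let G be symmetric positive semidefinite, A a matrix, c a vector, and define v := −(I − G Aᵀ (A G Aᵀ)⁺ A) G c. If cᵀ G c = cᵀ G Aᵀ (A G Aᵀ)⁺ A G c, then v = 0. -/
/-!
Put `P = Aᵀ B A G`, so that `v = -G (1 - P) c`. Since `G ⪰ 0`, the range of `A G` equals that of
`K = A G Aᵀ`, on which `K B` acts as the identity (`K B K = K`); hence `K B A G = A G`, and then
`(1 - P)ᵀ G (1 - P) = G (1 - P)`. For `w = (1 - P) c` this gives
`wᵀ G w = cᵀ G c - cᵀ G Aᵀ B A G c = 0`, and a positive semidefinite `G` with `wᵀ G w = 0`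
satisfies `G w = 0`.
-/

open Matrix
open scoped ComplexOrder

namespace Matrix

variable {m n 𝕜 R : Type*} [Fintype n]

theorem PosSemidef.mul_eq_zero_of_mul_mul_conjTranspose_eq_zero [RCLike 𝕜]
    {G : Matrix n n 𝕜} (hG : G.PosSemidef) {X : Matrix m n 𝕜} (h : X * G * Xᴴ = 0) :
    X * G = 0 := by
  classical
  open MatrixOrder in
  obtain ⟨S, rfl⟩ := CStarAlgebra.nonneg_iff_eq_star_mul_self.mp hG.nonneg
  have hXS : X * Sᴴ = 0 := self_mul_conjTranspose_eq_zero.mp <| by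
    simpa [star_eq_conjTranspose, Matrix.mul_assoc] using h
  rw [star_eq_conjTranspose, ← Matrix.mul_assoc, hXS, Matrix.zero_mul]

theorem PosSemidef.mul_mul_conjTranspose_mul_mul_mul_eq [RCLike 𝕜] [Fintype m] [DecidableEq m]
    {G : Matrix n n 𝕜} (hG : G.PosSemidef) (A : Matrix m n 𝕜) {B : Matrix m m 𝕜}
    (hB : A * G * Aᴴ * B * (A * G * Aᴴ) = A * G * Aᴴ) :
    A * G * Aᴴ * B * A * G = A * G := by
  set Y := A * G * Aᴴ * B - 1
  have hYK : Y * (A * G * Aᴴ) = 0 := by rw [Matrix.sub_mul, Matrix.one_mul, hB, sub_self]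
  have hX : Y * A * G * (Y * A)ᴴ = 0 := by
    calc Y * A * G * (Y * A)ᴴ = Y * (A * G * Aᴴ) * Yᴴ := by
          simp only [conjTranspose_mul, Matrix.mul_assoc]
      _ = 0 := by rw [hYK, Matrix.zero_mul]
  have := hG.mul_eq_zero_of_mul_mul_conjTranspose_eq_zero hX
  rwa [Matrix.sub_mul, Matrix.sub_mul, Matrix.one_mul, sub_eq_zero] at this

theorem transpose_one_sub_mul_mul_one_sub [Fintype m] [CommRing R] [DecidableEq n]
    {G : Matrix n n R} (hG : Gᵀ = G) (A : Matrix m n R) (B : Matrix m m R)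
    (hB : A * G * Aᵀ * B * A * G = A * G) :
    (1 - Aᵀ * B * A * G)ᵀ * G * (1 - Aᵀ * B * A * G) = G * (1 - Aᵀ * B * A * G) := by
  have hPGP : (Aᵀ * B * A * G)ᵀ * G * (Aᵀ * B * A * G) = (Aᵀ * B * A * G)ᵀ * G := by
    simp only [transpose_mul, transpose_transpose, hG, Matrix.mul_assoc] at hB ⊢
    rw [hB]
  simp only [transpose_sub, transpose_one, Matrix.sub_mul, Matrix.mul_sub, Matrix.one_mul,
    Matrix.mul_one, hPGP]
  abel

end Matrix

theorem stmt3_general {n m : ℕ}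
    (G : Matrix (Fin n) (Fin n) ℝ) (hG : G.PosSemidef)
    (A : Matrix (Fin m) (Fin n) ℝ) (c : Fin n → ℝ)
    (B : Matrix (Fin m) (Fin m) ℝ)
    (hB1 : (A * G * Aᵀ) * B * (A * G * Aᵀ) = A * G * Aᵀ)
    (heq : c ⬝ᵥ G.mulVec c = c ⬝ᵥ (G * Aᵀ * B * A * G).mulVec c) :
    -(1 - G * Aᵀ * B * A).mulVec (G.mulVec c) = 0 := by
  have hGt : Gᵀ = G := by simpa using hG.isHermitian.eq
  have hAG : A * G * Aᵀ * B * A * G = A * G := by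
    simpa using hG.mul_mul_conjTranspose_mul_mul_mul_eq A (B := B) (by simpa using hB1)
  set P := Aᵀ * B * A * G
  have hGP : (1 - G * Aᵀ * B * A) * G = G * (1 - P) := by
    simp only [P, Matrix.sub_mul, Matrix.mul_sub, Matrix.one_mul, Matrix.mul_one, Matrix.mul_assoc]
  have hquad : (1 - P) *ᵥ c ⬝ᵥ G *ᵥ ((1 - P) *ᵥ c) = 0 := by
    calc (1 - P) *ᵥ c ⬝ᵥ G *ᵥ ((1 - P) *ᵥ c) = c ⬝ᵥ ((1 - P)ᵀ * G * (1 - P)) *ᵥ c := by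
          nth_rw 1 [← vecMul_transpose, ← dotProduct_mulVec]
          rw [mulVec_mulVec, mulVec_mulVec, Matrix.mul_assoc]
      _ = c ⬝ᵥ G *ᵥ c - c ⬝ᵥ (G * Aᵀ * B * A * G) *ᵥ c := by
          rw [transpose_one_sub_mul_mul_one_sub hGt A B hAG, Matrix.mul_sub, Matrix.mul_one,
            sub_mulVec, dotProduct_sub]
          simp only [Matrix.mul_assoc]
      _ = 0 := by rw [heq, sub_self]
  have hker : G *ᵥ ((1 - P) *ᵥ c) = 0 :=
    (hG.dotProduct_mulVec_zero_iff _).mp (by simpa using hquad)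
  rw [mulVec_mulVec, hGP, ← mulVec_mulVec, hker, neg_zero]

/-- With `v = −(I − G Aᵀ (A G Aᵀ)⁺ A) G c`, if
`cᵀ G c = cᵀ G Aᵀ (A G Aᵀ)⁺ A G c` then `v = 0`. -/
theorem stmt3 {n m : ℕ}
    (G : Matrix (Fin n) (Fin n) ℝ) (hG : G.PosSemidef)
    (A : Matrix (Fin m) (Fin n) ℝ) (c : Fin n → ℝ)
    (B : Matrix (Fin m) (Fin m) ℝ)
    (hB1 : (A * G * Aᵀ) * B * (A * G * Aᵀ) = A * G * Aᵀ)
    (hB2 : B * (A * G * Aᵀ) * B = B)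
    (hB3 : ((A * G * Aᵀ) * B)ᵀ = (A * G * Aᵀ) * B)
    (hB4 : (B * (A * G * Aᵀ))ᵀ = B * (A * G * Aᵀ))
    (heq : c ⬝ᵥ G.mulVec c = c ⬝ᵥ (G * Aᵀ * B * A * G).mulVec c) :
    -(1 - G * Aᵀ * B * A).mulVec (G.mulVec c) = 0 :=
  stmt3_general G hG A c B hB1 heq
end

section
/- Let X : [0, ∞) → Matₙ(ℝ) be a continuously differentiable curve with X(0) symmetric positive definite, and suppose X(t) is symmetric for all t. If there is a constant μ ∈ ℝ such that whenever X is positive definite on [0, s] the derivative d/dt (log det X(t)) ≥ μ holds on [0, s], then X(T) is positive definite for every finite T ≥ 0. -/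
/-!
Positive definiteness of a continuous Hermitian curve is an open condition, by compactness of the
unit sphere. At the first time `τ` at which `X` could fail to be positive definite, the lower bound
on the derivative gives `log det X t ≥ log det X 0 - |μ| τ` for `t < τ`, so the limit `X τ` is
positive semidefinite with determinant bounded away from zero, hence positive definite.
-/

open Matrix Filter Topology Set

theorem IsOpen.Ici_subset_of_forall_Ico_subset {α : Type*} [ConditionallyCompleteLinearOrder α]
    [TopologicalSpace α] [OrderTopology α] {s : Set α} (hs : IsOpen s) {a : α}
    (h : ∀ τ, a ≤ τ → Ico a τ ⊆ s → τ ∈ s) : Ici a ⊆ s := by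
  intro T hT
  by_contra hTs
  set B := Icc a T ∩ sᶜ
  have hBbdd : BddBelow B := ⟨a, fun t ht => ht.1.1⟩
  have hτ : sInf B ∈ B :=
    (isClosed_Icc.inter hs.isClosed_compl).csInf_mem ⟨T, ⟨hT, le_rfl⟩, hTs⟩ hBbdd
  refine hτ.2 (h _ hτ.1.1 fun t ht => ?_)
  by_contra hts
  exact notMem_of_lt_csInf ht.2 hBbdd ⟨⟨ht.1, ht.2.le.trans hτ.1.2⟩, hts⟩

theorem mul_sub_le_log_sub_log_of_le_deriv_log {f : ℝ → ℝ} {a b μ : ℝ} (hab : a ≤ b)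
    (hf : ∀ t ∈ Icc a b, DifferentiableAt ℝ f t) (hpos : ∀ t ∈ Icc a b, 0 < f t)
    (hμ : ∀ t ∈ Icc a b, μ ≤ deriv (fun u => Real.log (f u)) t) :
    μ * (b - a) ≤ Real.log (f b) - Real.log (f a) := by
  have hlog : ∀ t ∈ Icc a b, DifferentiableAt ℝ (fun u => Real.log (f u)) t :=
    fun t ht => (hf t ht).log (hpos t ht).ne'
  exact (convex_Icc a b).mul_sub_le_image_sub_of_le_deriv
    (fun t ht => (hlog t ht).continuousAt.continuousWithinAt)
    (fun t ht => (hlog t (interior_subset ht)).differentiableWithinAt)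
    (fun t ht => hμ t (interior_subset ht)) a (left_mem_Icc.2 hab) b (right_mem_Icc.2 hab) hab

namespace Matrix

variable {n : Type*} [Fintype n]

theorem differentiable_det_of_entries {𝕜 E : Type*} [NontriviallyNormedField 𝕜]
    [NormedAddCommGroup E] [NormedSpace 𝕜 E] [DecidableEq n] {A : E → Matrix n n 𝕜}
    (hA : ∀ i j, Differentiable 𝕜 fun x => A x i j) : Differentiable 𝕜 fun x => (A x).det := by
  simp only [det_apply']
  fun_prop

theorem posDef_of_forall_norm_eq_one {A : Matrix n n ℝ} (hA : A.IsHermitian)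
    (h : ∀ x : n → ℝ, ‖x‖ = 1 → 0 < x ⬝ᵥ A *ᵥ x) : A.PosDef := by
  refine .of_dotProduct_mulVec_pos hA fun x hx => ?_
  have hnorm : 0 < ‖x‖ := norm_pos_iff.mpr hx
  have hunit := h (‖x‖⁻¹ • x) (by rw [norm_smul, norm_inv, norm_norm, inv_mul_cancel₀ hnorm.ne'])
  rw [mulVec_smul, smul_dotProduct, dotProduct_smul, smul_smul, smul_eq_mul] at hunit
  rw [star_trivial]
  exact pos_of_mul_pos_right hunit (by positivity)

theorem eventually_posDef {α : Type*} [TopologicalSpace α] {A : α → Matrix n n ℝ} {t₀ : α}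
    (hA : ContinuousAt A t₀) (hherm : ∀ᶠ t in 𝓝 t₀, (A t).IsHermitian) (h₀ : (A t₀).PosDef) :
    ∀ᶠ t in 𝓝 t₀, (A t).PosDef := by
  have hform : Continuous fun p : Matrix n n ℝ × (n → ℝ) => p.2 ⬝ᵥ p.1 *ᵥ p.2 :=
    continuous_snd.dotProduct (continuous_fst.matrix_mulVec continuous_snd)
  have hsphere : ∀ᶠ t in 𝓝 t₀, ∀ x ∈ Metric.sphere (0 : n → ℝ) 1, 0 < x ⬝ᵥ A t *ᵥ x := by
    refine (isCompact_sphere 0 1).eventually_forall_of_forall_eventually fun x hx => ?_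
    have hx0 : x ≠ 0 := ne_zero_of_mem_unit_sphere ⟨x, hx⟩
    refine Tendsto.eventually_const_lt (by simpa using h₀.dotProduct_mulVec_pos hx0) ?_
    exact (hform.continuousAt.comp ((hA.comp continuousAt_fst).prodMk continuousAt_snd)).tendsto
  filter_upwards [hsphere, hherm] with t ht hht
  exact posDef_of_forall_norm_eq_one hht fun x hx => ht x (by simpa using hx)

theorem isClosed_setOf_posSemidef : IsClosed {A : Matrix n n ℝ | A.PosSemidef} := by
  simp only [posSemidef_iff_dotProduct_mulVec, ofPred_and, ofPred_forall]
  refine (isClosed_eq continuous_id.matrix_conjTranspose continuous_id).inter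
    (isClosed_iInter fun x => isClosed_le continuous_const ?_)
  exact continuous_const.dotProduct (continuous_id.matrix_mulVec continuous_const)

theorem posDef_of_tendsto [DecidableEq n] {α : Type*} {l : Filter α} [l.NeBot]
    {A : α → Matrix n n ℝ} {A₀ : Matrix n n ℝ} (hA : Tendsto A l (𝓝 A₀))
    (hpsd : ∀ᶠ t in l, (A t).PosSemidef) {c : ℝ} (hc : 0 < c)
    (hdet : ∀ᶠ t in l, c ≤ (A t).det) : A₀.PosDef := by
  have hlim : A₀ ∈ {B : Matrix n n ℝ | B.PosSemidef ∧ c ≤ B.det} :=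
    (isClosed_setOf_posSemidef.inter (isClosed_le continuous_const continuous_id.matrix_det)
      ).mem_of_tendsto hA (hpsd.and hdet)
  exact hlim.1.posDef_iff_det_ne_zero.mpr (hc.trans_le hlim.2).ne'

end Matrix

/-- Let `X` be a continuously differentiable symmetric matrix
curve with `X 0` positive definite. If there is a constant `μ` such that on
every interval `[0, s]` on which `X` remains positive definite the derivative
of `t ↦ log det X(t)` is bounded below by `μ`, then `X T` is positive
definite for every finite `T ≥ 0`. -/
theorem stmt10 {n : ℕ} (X : ℝ → Matrix (Fin n) (Fin n) ℝ)
    (hC1 : ∀ i j, ContDiff ℝ 1 (fun t => X t i j))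
    (hsymm : ∀ t, (X t).IsHermitian)
    (hX0 : (X 0).PosDef)
    (μ : ℝ)
    (hμ : ∀ s, 0 ≤ s → (∀ t ∈ Set.Icc (0 : ℝ) s, (X t).PosDef) →
      ∀ t ∈ Set.Icc (0 : ℝ) s, μ ≤ deriv (fun u => Real.log (X u).det) t) :
    ∀ T, 0 ≤ T → (X T).PosDef := by
  have hX : Continuous X := continuous_pi fun i => continuous_pi fun j => (hC1 i j).continuous
  have hdet : Differentiable ℝ fun t => (X t).det :=
    differentiable_det_of_entries fun i j => (hC1 i j).differentiable one_ne_zero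
  have hopen : IsOpen {t | (X t).PosDef} :=
    isOpen_iff_mem_nhds.mpr fun t ht => eventually_posDef hX.continuousAt (.of_forall hsymm) ht
  refine fun T hT => hopen.Ici_subset_of_forall_Ico_subset (fun τ hτ hbefore => ?_) hT
  rcases hτ.eq_or_lt with rfl | hτ
  · exact hX0
  have hlower : ∀ t ∈ Ico 0 τ, Real.exp (Real.log (X 0).det - |μ| * τ) ≤ (X t).det := by
    intro t ht
    have hpos : ∀ u ∈ Icc 0 t, (X u).PosDef := fun u hu => hbefore ⟨hu.1, hu.2.trans_lt ht.2⟩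
    have hgrowth := mul_sub_le_log_sub_log_of_le_deriv_log ht.1 (fun u _ => hdet u)
      (fun u hu => (hpos u hu).det_pos) (hμ t ht.1 hpos)
    rw [← Real.exp_log (hpos t ⟨ht.1, le_rfl⟩).det_pos, Real.exp_le_exp]
    nlinarith [neg_abs_le μ, abs_nonneg μ, ht.1, ht.2]
  have hleft : Ico 0 τ ∈ 𝓝[<] τ := Ico_mem_nhdsLT hτ
  exact posDef_of_tendsto (hX.continuousAt.tendsto.mono_left nhdsWithin_le_nhds)
    (mem_of_superset hleft fun t ht => (hbefore ht).posSemidef) (Real.exp_pos _)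
    (mem_of_superset hleft hlower)
end

section
/- Let X be a differentiable matrix curve with X(t) symmetric positive definite and Ẋ(t) in the kernel of the constraint map (tr(Aℓ Ẋ) = 0 for all ℓ), where the dynamics are the first ansatz: vec(Ẋ) = −(I − G 𝒜ᵀ(𝒜G𝒜ᵀ)⁻¹𝒜) G vec(C) with G = ½(C⁻¹⊗X + X⊗C⁻¹). If C⁻¹ and X(0) satisfy the linear constraints 𝒜 vec(C⁻¹) = b and 𝒜 vec(X(0)) = b, then d/dt log det X(t) = −n + bᵀ(𝒜G𝒜ᵀ)⁻¹b ≥ −n. -/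
open Matrix Kronecker

/-- Column-stacking vectorization of a square matrix: `vec M (j, i) = M i j`. -/
def vec {n : ℕ} (M : Matrix (Fin n) (Fin n) ℝ) : Fin n × Fin n → ℝ :=
  fun p => M p.2 p.1

/-- The `m × n²` constraint matrix whose rows are `vec(Aℓ)ᵀ`. -/
def constrMat {n m : ℕ} (A : Fin m → Matrix (Fin n) (Fin n) ℝ) :
    Matrix (Fin m) (Fin n × Fin n) ℝ :=
  Matrix.of fun ℓ p => _root_.vec (A ℓ) p

/-- The conductance of the first ansatz: `G = ½ (C⁻¹ ⊗ X + X ⊗ C⁻¹)`. -/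
noncomputable def conduct {n : ℕ} (C X : Matrix (Fin n) (Fin n) ℝ) :
    Matrix (Fin n × Fin n) (Fin n × Fin n) ℝ :=
  (1 / 2 : ℝ) • (C⁻¹ ⊗ₖ X + X ⊗ₖ C⁻¹)

/-! By Jacobi's formula, `d/dt log det X = tr(X⁻¹Ẋ) = ⟨vec X⁻¹, vec Ẋ⟩`. Since `G vec C = vec X`,
the dynamics read `vec Ẋ = −(I − G𝒜ᵀ(𝒜G𝒜ᵀ)⁻¹𝒜) vec X`. Pairing with `vec X⁻¹` and moving the
symmetric `G` across turns `G vec X⁻¹` into `vec C⁻¹`, whose constraint values are `b`, while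
`𝒜 vec X(t) = b` for all `t` because `Ẋ` stays in the kernel of the constraints. What is left is
`−tr(X⁻¹X) + bᵀ(𝒜G𝒜ᵀ)⁻¹b = −n + bᵀ(𝒜G𝒜ᵀ)⁻¹b`, and the quadratic form is nonnegative since
`(𝒜G𝒜ᵀ)⁻¹` is positive definite. -/

theorem Matrix.hasDerivAt_det {𝕜 ι : Type*} [NontriviallyNormedField 𝕜] [Fintype ι]
    [DecidableEq ι] {X : 𝕜 → Matrix ι ι 𝕜} {X' : Matrix ι ι 𝕜} {t : 𝕜}
    (hX : ∀ i j, HasDerivAt (fun s => X s i j) (X' i j) t) :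
    HasDerivAt (fun s => (X s).det) (∑ j, ((X t).updateCol j fun i => X' i j).det) t := by
  simp only [det_apply']
  have hterm : ∀ σ : Equiv.Perm ι, HasDerivAt (fun s => (σ.sign : 𝕜) * ∏ j, X s (σ j) j)
      ((σ.sign : 𝕜) * ∑ j, ∏ k, (X t).updateCol j (fun i => X' i j) (σ k) k) t := by
    intro σ
    refine (HasDerivAt.fun_finsetProd fun j _ => hX (σ j) j).const_mul _ |>.congr_deriv ?_
    congr 1
    refine Finset.sum_congr rfl fun j _ => ?_
    rw [← Finset.mul_prod_erase _ _ (Finset.mem_univ j), smul_eq_mul, mul_comm, updateCol_self]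
    congr 1
    refine Finset.prod_congr rfl fun k hk => ?_
    rw [updateCol_ne (Finset.ne_of_mem_erase hk)]
  refine (HasDerivAt.fun_sum fun σ _ => hterm σ).congr_deriv ?_
  simp only [Finset.mul_sum]
  exact Finset.sum_comm

theorem Matrix.sum_det_updateCol_eq_trace_mul_det {R ι : Type*} [CommRing R] [Fintype ι]
    [DecidableEq ι] (M H : Matrix ι ι R) (hM : IsUnit M.det) :
    ∑ j, (M.updateCol j fun i => H i j).det = (M⁻¹ * H).trace * M.det := by
  have hcol : ∀ j, (fun i => H i j) = fun i => ∑ k, (M⁻¹ * H) k j • M i k := by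
    intro j
    funext i
    conv_lhs => rw [← mul_nonsing_inv_cancel_left M H hM]
    simp only [mul_apply, smul_eq_mul, mul_comm]
  simp only [hcol, det_updateCol_sum]
  simp only [smul_eq_mul, trace, diag, Finset.sum_mul]

theorem Matrix.hasDerivAt_log_det {ι : Type*} [Fintype ι] [DecidableEq ι]
    {X : ℝ → Matrix ι ι ℝ} {X' : Matrix ι ι ℝ} {t : ℝ}
    (hX : ∀ i j, HasDerivAt (fun s => X s i j) (X' i j) t) (hdet : (X t).det ≠ 0) :
    HasDerivAt (fun s => Real.log (X s).det) ((X t)⁻¹ * X').trace t := by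
  have h := (hasDerivAt_det hX).log hdet
  rwa [sum_det_updateCol_eq_trace_mul_det _ _ hdet.isUnit, mul_div_cancel_right₀ _ hdet] at h

theorem Matrix.dotProduct_mulVec_one_sub_projection {R ι κ : Type*} [CommRing R]
    [Fintype ι] [Fintype κ] [DecidableEq ι] [DecidableEq κ] {G : Matrix ι ι R} (hG : G.IsSymm)
    (L : Matrix κ ι R) {w x : ι → R} {b : κ → R} (hw : L *ᵥ (G *ᵥ w) = b) (hx : L *ᵥ x = b) :
    w ⬝ᵥ ((1 - G * Lᵀ * (L * G * Lᵀ)⁻¹ * L) *ᵥ x) = w ⬝ᵥ x - b ⬝ᵥ (L * G * Lᵀ)⁻¹ *ᵥ b := by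
  rw [sub_mulVec, one_mulVec, dotProduct_sub, ← mulVec_mulVec, ← mulVec_mulVec,
    ← mulVec_mulVec, hx, dotProduct_mulVec, ← mulVec_transpose, hG.eq, dotProduct_mulVec,
    ← mulVec_transpose, transpose_transpose, hw]

section Vectorization

variable {n m : ℕ}

theorem vec_eq_matrixVec (M : Matrix (Fin n) (Fin n) ℝ) : _root_.vec M = Matrix.vec M := rfl

theorem isSymm_conduct {C X : Matrix (Fin n) (Fin n) ℝ} (hC : C.IsSymm) (hX : X.IsSymm) :
    (conduct C X).IsSymm := by
  refine IsSymm.smul (IsSymm.add ?_ ?_) _ <;>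
    rw [IsSymm, ← kroneckerMap_transpose, hC.inv.eq, hX.eq]

theorem conduct_mulVec_vec {C X : Matrix (Fin n) (Fin n) ℝ} (hC : C.IsSymm) (hX : X.IsSymm)
    (M : Matrix (Fin n) (Fin n) ℝ) :
    conduct C X *ᵥ _root_.vec M = (1 / 2 : ℝ) • _root_.vec (X * M * C⁻¹ + C⁻¹ * M * X) := by
  rw [conduct, smul_mulVec, add_mulVec, vec_eq_matrixVec, vec_eq_matrixVec, vec_add,
    kronecker_mulVec_vec, kronecker_mulVec_vec, hC.inv.eq, hX.eq]

theorem conduct_mulVec_vec_self {C X : Matrix (Fin n) (Fin n) ℝ} (hC : C.IsSymm)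
    (hCdet : IsUnit C.det) (hX : X.IsSymm) : conduct C X *ᵥ _root_.vec C = _root_.vec X := by
  rw [conduct_mulVec_vec hC hX, mul_nonsing_inv_cancel_right _ _ hCdet,
    nonsing_inv_mul _ hCdet, Matrix.one_mul, ← two_smul ℝ X, vec_eq_matrixVec, vec_eq_matrixVec,
    vec_smul, smul_smul]
  norm_num

theorem conduct_mulVec_vec_inv {C X : Matrix (Fin n) (Fin n) ℝ} (hC : C.IsSymm) (hX : X.IsSymm)
    (hXdet : IsUnit X.det) : conduct C X *ᵥ _root_.vec X⁻¹ = _root_.vec C⁻¹ := by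
  rw [conduct_mulVec_vec hC hX, mul_nonsing_inv _ hXdet, Matrix.one_mul,
    nonsing_inv_mul_cancel_right _ _ hXdet, ← two_smul ℝ C⁻¹, vec_eq_matrixVec,
    vec_eq_matrixVec, vec_smul, smul_smul]
  norm_num

theorem constrMat_mulVec_vec_apply (A : Fin m → Matrix (Fin n) (Fin n) ℝ)
    (M : Matrix (Fin n) (Fin n) ℝ) (ℓ : Fin m) :
    (constrMat A *ᵥ _root_.vec M) ℓ = ((A ℓ)ᵀ * M).trace :=
  vec_dotProduct_vec (A ℓ) M

theorem hasDerivAt_mulVec_vec_apply {κ : Type*} (L : Matrix κ (Fin n × Fin n) ℝ)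
    {X : ℝ → Matrix (Fin n) (Fin n) ℝ} {X' : Matrix (Fin n) (Fin n) ℝ} {t : ℝ}
    (hX : ∀ i j, HasDerivAt (fun s => X s i j) (X' i j) t) (k : κ) :
    HasDerivAt (fun s => (L *ᵥ _root_.vec (X s)) k) ((L *ᵥ _root_.vec X') k) t :=
  HasDerivAt.fun_sum fun p _ => (hX p.2 p.1).const_mul (L k p)

theorem constrMat_mulVec_vec_eq_of_trace_mul_eq_zero {A : Fin m → Matrix (Fin n) (Fin n) ℝ}
    (hA : ∀ ℓ, (A ℓ)ᵀ = A ℓ) {X X' : ℝ → Matrix (Fin n) (Fin n) ℝ}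
    (hX' : ∀ t i j, HasDerivAt (fun s => X s i j) (X' t i j) t)
    (hkernel : ∀ t ℓ, (A ℓ * X' t).trace = 0) (s t : ℝ) :
    constrMat A *ᵥ _root_.vec (X s) = constrMat A *ᵥ _root_.vec (X t) := by
  funext ℓ
  have hder (u : ℝ) := hasDerivAt_mulVec_vec_apply (constrMat A) (hX' u) ℓ
  refine is_const_of_deriv_eq_zero (fun u => (hder u).differentiableAt) (fun u => ?_) s t
  rw [(hder u).deriv, constrMat_mulVec_vec_apply, hA, hkernel]

end Vectorization

/-- Along the first-ansatz Physarum dynamics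
`vec(Ẋ) = −(I − G𝒜ᵀ(𝒜G𝒜ᵀ)⁻¹𝒜) G vec(C)` with `G = ½(C⁻¹⊗X + X⊗C⁻¹)`,
if `C⁻¹` and `X 0` satisfy the linear constraints, then
`d/dt log det X(t) = −n + bᵀ(𝒜G𝒜ᵀ)⁻¹b ≥ −n`. -/
theorem stmt11 {n m : ℕ} (C : Matrix (Fin n) (Fin n) ℝ) (hC : C.PosDef)
    (A : Fin m → Matrix (Fin n) (Fin n) ℝ) (hA : ∀ ℓ, (A ℓ)ᵀ = A ℓ)
    (b : Fin m → ℝ)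
    (X X' : ℝ → Matrix (Fin n) (Fin n) ℝ)
    (hX : ∀ t, (X t).PosDef)
    (hX' : ∀ t i j, HasDerivAt (fun s => X s i j) (X' t i j) t)
    (hdyn : ∀ t, _root_.vec (X' t) =
      -((1 - conduct C (X t) * (constrMat A)ᵀ *
          (constrMat A * conduct C (X t) * (constrMat A)ᵀ)⁻¹ *
          constrMat A).mulVec ((conduct C (X t)).mulVec (_root_.vec C))))
    (hkernel : ∀ t ℓ, Matrix.trace (A ℓ * X' t) = 0)
    (hinv : ∀ t, (constrMat A * conduct C (X t) * (constrMat A)ᵀ).PosDef)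
    (hCfeas : (constrMat A).mulVec (_root_.vec C⁻¹) = b)
    (hX0feas : (constrMat A).mulVec (_root_.vec (X 0)) = b) :
    ∀ t, HasDerivAt (fun s => Real.log (X s).det)
        (-(n : ℝ) + b ⬝ᵥ (constrMat A * conduct C (X t) * (constrMat A)ᵀ)⁻¹.mulVec b) t ∧
      -(n : ℝ) ≤ -(n : ℝ) +
        b ⬝ᵥ (constrMat A * conduct C (X t) * (constrMat A)ᵀ)⁻¹.mulVec b := by
  intro t
  have hCs : C.IsSymm := isHermitian_iff_isSymm.mp hC.isHermitian
  have hXs : (X t).IsSymm := isHermitian_iff_isSymm.mp (hX t).isHermitian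
  have hXdet : (X t).det ≠ 0 := (hX t).det_pos.ne'
  have hfeas : constrMat A *ᵥ _root_.vec (X t) = b := by
    rw [constrMat_mulVec_vec_eq_of_trace_mul_eq_zero hA hX' hkernel t 0, hX0feas]
  have hself : _root_.vec (X t)⁻¹ ⬝ᵥ _root_.vec (X t) = n := by
    rw [vec_eq_matrixVec, vec_eq_matrixVec, vec_dotProduct_vec, hXs.inv.eq,
      nonsing_inv_mul _ hXdet.isUnit, trace_one, Fintype.card_fin]
  have htrace : ((X t)⁻¹ * X' t).trace =
      -(n : ℝ) + b ⬝ᵥ (constrMat A * conduct C (X t) * (constrMat A)ᵀ)⁻¹ *ᵥ b := by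
    rw [← hXs.inv.eq, ← vec_dotProduct_vec, ← vec_eq_matrixVec, ← vec_eq_matrixVec, hdyn t,
      conduct_mulVec_vec_self hCs hC.det_pos.ne'.isUnit hXs, dotProduct_neg,
      dotProduct_mulVec_one_sub_projection (isSymm_conduct hCs hXs) _
        (by rw [conduct_mulVec_vec_inv hCs hXs hXdet.isUnit, hCfeas]) hfeas, hself]
    ring
  refine ⟨htrace ▸ hasDerivAt_log_det (hX' t) hXdet, ?_⟩
  simpa using ((hinv t).inv.posSemidef.dotProduct_mulVec_nonneg b)
end

section
/- Let G be symmetric positive semidefinite, 𝒜 a matrix, C a cost vector. The vector F* = −(I − G𝒜ᵀ(𝒜G𝒜ᵀ)⁺𝒜)G vec(C) is the unique minimizer of the quadratic program min { vec(C)ᵀ f + ½ fᵀ G⁺ f : 𝒜 f = 0, f ∈ range(G) }. -/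
/-!
Put `p = B 𝒜 G c` and `v = 𝒜ᵀ p - c`, so that `F* = G v` and `c + v ∈ range 𝒜ᵀ` is the Lagrange
condition. Feasibility `𝒜 F* = 0` holds because `(𝒜G𝒜ᵀ) B` fixes the columns of `𝒜 G`: factoring
`G = Rᴴ R` gives `𝒜G𝒜ᵀ = Q Qᴴ` with `Q = 𝒜 Rᴴ`, and `(Q Qᴴ B - 1) Q Qᴴ = 0` forces
`(Q Qᴴ B - 1) Q = 0`. Since `G G⁺ G = G`, the objective at `f = G y` equals `c ⬝ Gy + ½ y ⬝ Gy`;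
for a feasible `f = G (v + w)` the linear term in `w` vanishes by the Lagrange condition, leaving
the increase `½ w ⬝ Gw`, which is positive unless `G w = 0`.
-/

open Matrix
open scoped MatrixOrder ComplexOrder

namespace Matrix

lemma mul_conjTranspose_mul_mul_eq_self_s12 {ι n R : Type*} [Fintype ι] [Fintype n]
    [PartialOrder R] [Ring R] [StarRing R] [StarOrderedRing R] [NoZeroDivisors R]
    (Q : Matrix ι n R) {B : Matrix ι ι R} (hB : Q * Qᴴ * B * (Q * Qᴴ) = Q * Qᴴ) :
    Q * Qᴴ * B * Q = Q := by
  classical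
  have h : (Q * Qᴴ * B - 1) * (Q * Qᴴ) = 0 := by
    rw [Matrix.sub_mul, hB, Matrix.one_mul, sub_self]
  rwa [mul_self_mul_conjTranspose_eq_zero, Matrix.sub_mul, Matrix.one_mul, sub_eq_zero] at h

lemma PosSemidef.mul_mul_conjTranspose_mul_mul_eq_s12 {ι n 𝕜 : Type*} [Fintype ι] [Fintype n]
    [RCLike 𝕜] {G : Matrix n n 𝕜} (hG : G.PosSemidef) (A : Matrix ι n 𝕜) {B : Matrix ι ι 𝕜}
    (hB : A * G * Aᴴ * B * (A * G * Aᴴ) = A * G * Aᴴ) :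
    A * G * Aᴴ * B * (A * G) = A * G := by
  classical
  obtain ⟨R, rfl⟩ := CStarAlgebra.nonneg_iff_eq_star_mul_self.mp hG.nonneg
  have hQ : A * (star R * R) * Aᴴ = A * Rᴴ * (A * Rᴴ)ᴴ := by
    simp only [conjTranspose_mul, conjTranspose_conjTranspose, star_eq_conjTranspose,
      Matrix.mul_assoc]
  rw [hQ] at hB ⊢
  calc A * Rᴴ * (A * Rᴴ)ᴴ * B * (A * (star R * R))
      = A * Rᴴ * (A * Rᴴ)ᴴ * B * (A * Rᴴ) * R := by
        simp only [star_eq_conjTranspose, Matrix.mul_assoc]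
    _ = A * (star R * R) := by
        rw [mul_conjTranspose_mul_mul_eq_self_s12 _ hB, star_eq_conjTranspose, Matrix.mul_assoc]

end Matrix

section QuadraticProgram

variable {ι n : Type*} [Fintype ι] [Fintype n] {G Gp : Matrix n n ℝ}

lemma Matrix.PosSemidef.dotProduct_mulVec_comm (hG : G.PosSemidef) (x y : n → ℝ) :
    x ⬝ᵥ G *ᵥ y = y ⬝ᵥ G *ᵥ x := by
  rw [dotProduct_mulVec, ← mulVec_transpose, (isHermitian_iff_isSymm.mp hG.isHermitian).eq,
    dotProduct_comm]

lemma Matrix.PosSemidef.mulVec_dotProduct_mulVec_mulVec (hG : G.PosSemidef)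
    (hGp : G * Gp * G = G) (x y : n → ℝ) :
    G *ᵥ x ⬝ᵥ Gp *ᵥ (G *ᵥ y) = x ⬝ᵥ G *ᵥ y := by
  rw [← vecMul_transpose, (isHermitian_iff_isSymm.mp hG.isHermitian).eq, ← dotProduct_mulVec,
    mulVec_mulVec, mulVec_mulVec, hGp]

lemma Matrix.PosSemidef.dotProduct_mulVec_pos (hG : G.PosSemidef) {x : n → ℝ}
    (hx : G *ᵥ x ≠ 0) : 0 < x ⬝ᵥ G *ᵥ x := by
  have hzero := hG.dotProduct_mulVec_zero_iff x
  have hnonneg := hG.dotProduct_mulVec_nonneg x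
  rw [star_trivial] at hzero hnonneg
  exact hnonneg.lt_of_ne (Ne.symm (mt hzero.mp hx))

lemma quadratic_objective_lt_of_lagrange (hG : G.PosSemidef) (hGp : G * Gp * G = G)
    {A : Matrix ι n ℝ} {c v y : n → ℝ} (p : ι → ℝ) (hL : c + v = Aᵀ *ᵥ p)
    (hv : A *ᵥ (G *ᵥ v) = 0) (hy : A *ᵥ (G *ᵥ y) = 0) (hne : G *ᵥ y ≠ G *ᵥ v) :
    c ⬝ᵥ G *ᵥ v + 1 / 2 * (G *ᵥ v ⬝ᵥ Gp *ᵥ (G *ᵥ v)) <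
      c ⬝ᵥ G *ᵥ y + 1 / 2 * (G *ᵥ y ⬝ᵥ Gp *ᵥ (G *ᵥ y)) := by
  obtain ⟨w, rfl⟩ : ∃ w, y = v + w := ⟨y - v, by abel⟩
  have hGw : G *ᵥ w ≠ 0 := by rwa [mulVec_add, ne_eq, add_eq_left] at hne
  have hAw : A *ᵥ (G *ᵥ w) = 0 := by
    rwa [mulVec_add, mulVec_add, hv, zero_add] at hy
  have hlin : (c + v) ⬝ᵥ G *ᵥ w = 0 := by
    rw [hL, mulVec_transpose, ← dotProduct_mulVec, hAw, dotProduct_zero]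
  have hpos := hG.dotProduct_mulVec_pos hGw
  simp only [hG.mulVec_dotProduct_mulVec_mulVec hGp, mulVec_add, dotProduct_add,
    add_dotProduct] at hlin ⊢
  linarith [hG.dotProduct_mulVec_comm v w]

end QuadraticProgram

theorem stmt12_general {N : Type*} [Fintype N] [DecidableEq N] {m : ℕ}
    (G : Matrix N N ℝ) (hG : G.PosSemidef)
    (𝒜 : Matrix (Fin m) N ℝ) (c : N → ℝ)
    (Gp : Matrix N N ℝ)
    (hGp1 : G * Gp * G = G)
    (B : Matrix (Fin m) (Fin m) ℝ)
    (hB1 : (𝒜 * G * 𝒜ᵀ) * B * (𝒜 * G * 𝒜ᵀ) = 𝒜 * G * 𝒜ᵀ) :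
    let Fstar : N → ℝ := -(1 - G * 𝒜ᵀ * B * 𝒜).mulVec (G.mulVec c)
    let obj : (N → ℝ) → ℝ := fun f => c ⬝ᵥ f + (1 / 2 : ℝ) * (f ⬝ᵥ Gp.mulVec f)
    (𝒜.mulVec Fstar = 0 ∧ Fstar ∈ Set.range G.mulVec) ∧
    ∀ f, 𝒜.mulVec f = 0 → f ∈ Set.range G.mulVec → f ≠ Fstar →
      obj Fstar < obj f := by
  intro Fstar obj
  set p := B *ᵥ (𝒜 *ᵥ (G *ᵥ c))
  have hFstar : Fstar = G *ᵥ (𝒜ᵀ *ᵥ p - c) := by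
    rw [show Fstar = -((1 - G * 𝒜ᵀ * B * 𝒜) *ᵥ G *ᵥ c) from rfl, sub_mulVec, one_mulVec,
      neg_sub, mulVec_sub]
    simp only [p, mulVec_mulVec, Matrix.mul_assoc]
  have hproj : 𝒜 * G * 𝒜ᵀ * B * (𝒜 * G) = 𝒜 * G := by
    simpa only [conjTranspose_eq_transpose_of_trivial] using
      hG.mul_mul_conjTranspose_mul_mul_eq_s12 𝒜 (B := B)
        (by simpa only [conjTranspose_eq_transpose_of_trivial] using hB1)
  have hfeas : 𝒜 *ᵥ Fstar = 0 := by
    rw [hFstar, mulVec_sub, mulVec_sub, sub_eq_zero]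
    simp only [p, mulVec_mulVec]
    congr 1
    simpa only [Matrix.mul_assoc] using hproj
  refine ⟨⟨hfeas, _, hFstar.symm⟩, ?_⟩
  rintro f hf ⟨y, rfl⟩ hne
  rw [hFstar] at hfeas hne ⊢
  exact quadratic_objective_lt_of_lagrange hG hGp1 p (by abel) hfeas hf hne

/-- For symmetric PSD `G` (with pseudoinverse `Gp`), matrix `𝒜`
and cost vector `c = vec(C)`, the vector
`F* = −(I − G𝒜ᵀ(𝒜G𝒜ᵀ)⁺𝒜) G c` is the unique minimizer of
`f ↦ cᵀ f + ½ fᵀ G⁺ f` over `{f : 𝒜 f = 0, f ∈ range G}`. -/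
theorem stmt12 {N : Type*} [Fintype N] [DecidableEq N] {m : ℕ}
    (G : Matrix N N ℝ) (hG : G.PosSemidef)
    (𝒜 : Matrix (Fin m) N ℝ) (c : N → ℝ)
    (Gp : Matrix N N ℝ)
    (hGp1 : G * Gp * G = G) (hGp2 : Gp * G * Gp = Gp)
    (hGp3 : (G * Gp)ᵀ = G * Gp) (hGp4 : (Gp * G)ᵀ = Gp * G)
    (B : Matrix (Fin m) (Fin m) ℝ)
    (hB1 : (𝒜 * G * 𝒜ᵀ) * B * (𝒜 * G * 𝒜ᵀ) = 𝒜 * G * 𝒜ᵀ)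
    (hB2 : B * (𝒜 * G * 𝒜ᵀ) * B = B)
    (hB3 : ((𝒜 * G * 𝒜ᵀ) * B)ᵀ = (𝒜 * G * 𝒜ᵀ) * B)
    (hB4 : (B * (𝒜 * G * 𝒜ᵀ))ᵀ = B * (𝒜 * G * 𝒜ᵀ)) :
    let Fstar : N → ℝ := -(1 - G * 𝒜ᵀ * B * 𝒜).mulVec (G.mulVec c)
    let obj : (N → ℝ) → ℝ := fun f => c ⬝ᵥ f + (1 / 2 : ℝ) * (f ⬝ᵥ Gp.mulVec f)
    (𝒜.mulVec Fstar = 0 ∧ Fstar ∈ Set.range G.mulVec) ∧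
    ∀ f, 𝒜.mulVec f = 0 → f ∈ Set.range G.mulVec → f ≠ Fstar →
      obj Fstar < obj f :=
  stmt12_general G hG 𝒜 c Gp hGp1 B hB1
end
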